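/- For each n and 1 ≤ i ≤ n let W_{n,i} := s_n^{−2} Z_i² 1{Z_i² ≤ s_n²}. Then for every a > 0 there exists N such that for all n ≥ N, max_{1 ≤ k ≤ n} P( | Σ_{i=1}^k (W_{n,i} − E W_{n,i}) | > a ) ≤ 1/2. -/

import Mathlib

open MeasureTheory ProbabilityTheory Filter
open scoped Classical

/-- The truncated, normalized square `W_{n,i} = s_n^{-2} Z_i² 1{Z_i² ≤ s_n²}`. -/
noncomputable def Wtrunc {Ω : Type*} (Z : ℕ → Ω → ℝ) (σ2 : ℕ → ℝ) (n i : ℕ) (ω : Ω) : ℝ :=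
  if (Z i ω) ^ 2 ≤ ∑ j ∈ Finset.range n, σ2 j then
    (Z i ω) ^ 2 / ∑ j ∈ Finset.range n, σ2 j else 0

/-! Chebyshev's inequality and independence bound the probability by `a⁻² ∑_{i<n} E W_{n,i}²`.
Splitting at `|Z_i| = ε s_n`, each `E W_{n,i}²` is at most `ε² σ_i² / s_n²` plus
`s_n⁻² E[Z_i²; |Z_i| ≥ ε s_n]`, so the sum is at most `ε²` plus the Lindeberg quantity;
with `ε = a / 2` it is eventually below `a² / 2`. -/

noncomputable def truncSq (c x : ℝ) : ℝ :=
  if x ^ 2 ≤ c then x ^ 2 / c else 0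

theorem Wtrunc_eq_truncSq_comp {Ω : Type*} (Z : ℕ → Ω → ℝ) (σ2 : ℕ → ℝ) (n i : ℕ) :
    Wtrunc Z σ2 n i = truncSq (∑ j ∈ Finset.range n, σ2 j) ∘ Z i :=
  rfl

theorem measurable_truncSq (c : ℝ) : Measurable (truncSq c) :=
  Measurable.ite (measurableSet_le (measurable_id.pow_const 2) measurable_const)
    ((measurable_id.pow_const 2).div_const _) measurable_const

theorem truncSq_nonneg (c x : ℝ) : 0 ≤ truncSq c x := by
  unfold truncSq
  split_ifs with h
  · exact div_nonneg (sq_nonneg x) ((sq_nonneg x).trans h)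
  · exact le_rfl

theorem truncSq_le_div {c : ℝ} (hc : 0 ≤ c) (x : ℝ) : truncSq c x ≤ x ^ 2 / c := by
  unfold truncSq
  split_ifs
  · exact le_rfl
  · positivity

theorem truncSq_le_one {c : ℝ} (hc : 0 < c) (x : ℝ) : truncSq c x ≤ 1 := by
  unfold truncSq
  split_ifs with h
  · exact (div_le_one hc).2 h
  · exact zero_le_one

/-- Below the level `|x| = ε √c` one has `truncSq c x ≤ ε²`, above it `truncSq c x ≤ 1`. -/
theorem truncSq_sq_le {c : ℝ} (hc : 0 < c) (ε x : ℝ) :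
    truncSq c x ^ 2 ≤ ε ^ 2 * (x ^ 2 / c) + if ε * Real.sqrt c ≤ |x| then x ^ 2 / c else 0 := by
  have h0 := truncSq_nonneg c x
  have hdiv := truncSq_le_div hc.le x
  split_ifs with hx
  · have h1 := truncSq_le_one hc x
    nlinarith [sq_nonneg ε, div_nonneg (sq_nonneg x) hc.le]
  · have hx2 : x ^ 2 / c < ε ^ 2 := by
      rw [div_lt_iff₀ hc, ← Real.sq_sqrt hc.le, ← mul_pow, ← sq_abs x]
      exact pow_lt_pow_left₀ (not_le.1 hx) (abs_nonneg x) two_ne_zero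
    nlinarith

section Moments

variable {Ω : Type*} [MeasurableSpace Ω] {P : Measure Ω}

theorem memLp_truncSq_comp [IsFiniteMeasure P] {X : Ω → ℝ} (hX : AEStronglyMeasurable X P)
    {c : ℝ} (hc : 0 < c) (p : ENNReal) : MemLp (truncSq c ∘ X) p P := by
  refine MemLp.of_bound
    ((measurable_truncSq c).comp_aemeasurable hX.aemeasurable).aestronglyMeasurable 1
    (Eventually.of_forall fun ω => ?_)
  rw [Function.comp_apply, Real.norm_of_nonneg (truncSq_nonneg c _)]
  exact truncSq_le_one hc _

theorem integral_truncSq_comp_sq_le [IsFiniteMeasure P] {X : Ω → ℝ} (hX : MemLp X 2 P)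
    {c : ℝ} (hc : 0 < c) (ε : ℝ) :
    ∫ ω, truncSq c (X ω) ^ 2 ∂P ≤
      ε ^ 2 * ((∫ ω, X ω ^ 2 ∂P) / c) + (∫ ω in {ω | ε * Real.sqrt c ≤ |X ω|}, X ω ^ 2 ∂P) / c := by
  set S := {ω | ε * Real.sqrt c ≤ |X ω|}
  have hS : NullMeasurableSet S P :=
    aestronglyMeasurable_const.nullMeasurableSet_le hX.1.norm
  have hXsq : Integrable (fun ω => X ω ^ 2 / c) P := hX.integrable_sq.div_const c
  calc ∫ ω, truncSq c (X ω) ^ 2 ∂P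
      ≤ ∫ ω, (ε ^ 2 * (X ω ^ 2 / c) + S.indicator (fun ω => X ω ^ 2 / c) ω) ∂P := by
        refine integral_mono (memLp_truncSq_comp hX.1 hc 2).integrable_sq
          ((hXsq.const_mul _).add (hXsq.indicator₀ hS)) fun ω => ?_
        refine (truncSq_sq_le hc ε (X ω)).trans_eq ?_
        rw [Set.indicator_apply]
        exact congrArg _ (if_congr Iff.rfl rfl rfl)
    _ = ε ^ 2 * ((∫ ω, X ω ^ 2 ∂P) / c) + (∫ ω in S, X ω ^ 2 ∂P) / c := by
        rw [integral_add (hXsq.const_mul _) (hXsq.indicator₀ hS), integral_const_mul,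
          integral_indicator₀ hS, integral_div, integral_div]

theorem measure_lt_abs_sum_sub_integral_le [IsProbabilityMeasure P] {ι : Type*}
    {Y : ι → Ω → ℝ} (hindep : iIndepFun Y P) {s : Finset ι} (hY : ∀ i ∈ s, MemLp (Y i) 2 P)
    {a : ℝ} (ha : 0 < a) :
    P {ω | a < |∑ i ∈ s, (Y i ω - ∫ ω', Y i ω' ∂P)|} ≤
      ENNReal.ofReal ((∑ i ∈ s, variance (Y i) P) / a ^ 2) := by
  have hsum : MemLp (∑ i ∈ s, Y i) 2 P := memLp_finsetSum' s hY
  have hvar : variance (∑ i ∈ s, Y i) P = ∑ i ∈ s, variance (Y i) P :=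
    IndepFun.variance_sum hY fun i _ j _ hij => hindep.indepFun hij
  have hmean : ∫ ω, ∑ i ∈ s, Y i ω ∂P = ∑ i ∈ s, ∫ ω, Y i ω ∂P :=
    integral_finsetSum s fun i hi => (hY i hi).integrable one_le_two
  calc P {ω | a < |∑ i ∈ s, (Y i ω - ∫ ω', Y i ω' ∂P)|}
      ≤ P {ω | a ≤ |(∑ i ∈ s, Y i) ω - ∫ ω', (∑ i ∈ s, Y i) ω' ∂P|} := by
        refine measure_mono fun ω (hω : a < _) => ?_
        simp only [Set.mem_ofPred_eq, Finset.sum_apply]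
        rw [hmean, ← Finset.sum_sub_distrib]
        exact hω.le
    _ ≤ ENNReal.ofReal ((∑ i ∈ s, variance (Y i) P) / a ^ 2) := by
        rw [← hvar]
        exact meas_ge_le_variance_div_sq hsum ha

end Moments

theorem sum_integral_Wtrunc_sq_le {Ω : Type*} [MeasurableSpace Ω] {P : Measure Ω}
    [IsFiniteMeasure P] {Z : ℕ → Ω → ℝ} {σ2 : ℕ → ℝ} (hL2 : ∀ i, MemLp (Z i) 2 P)
    (hvar : ∀ i, ∫ ω, (Z i ω) ^ 2 ∂P = σ2 i) {n : ℕ} (hs : 0 < ∑ j ∈ Finset.range n, σ2 j)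
    (ε : ℝ) :
    ∑ i ∈ Finset.range n, ∫ ω, Wtrunc Z σ2 n i ω ^ 2 ∂P ≤
      ε ^ 2 + (∑ j ∈ Finset.range n, σ2 j)⁻¹ * ∑ i ∈ Finset.range n,
        ∫ ω in {ω | ε * Real.sqrt (∑ j ∈ Finset.range n, σ2 j) ≤ |Z i ω|}, (Z i ω) ^ 2 ∂P := by
  set s := ∑ j ∈ Finset.range n, σ2 j
  calc ∑ i ∈ Finset.range n, ∫ ω, Wtrunc Z σ2 n i ω ^ 2 ∂P
      ≤ ∑ i ∈ Finset.range n, (ε ^ 2 * (σ2 i / s) +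
          (∫ ω in {ω | ε * Real.sqrt s ≤ |Z i ω|}, (Z i ω) ^ 2 ∂P) / s) :=
        Finset.sum_le_sum fun i _ => by
          simpa only [Wtrunc_eq_truncSq_comp, Function.comp_apply, hvar i]
            using integral_truncSq_comp_sq_le (hL2 i) hs ε
    _ = ε ^ 2 + s⁻¹ * ∑ i ∈ Finset.range n,
          ∫ ω in {ω | ε * Real.sqrt s ≤ |Z i ω|}, (Z i ω) ^ 2 ∂P := by
        rw [Finset.sum_add_distrib, ← Finset.mul_sum, ← Finset.sum_div, ← Finset.sum_div,
          div_self hs.ne', mul_one, div_eq_inv_mul]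

theorem truncated_centered_partial_sums_uniformly_small_tails_general
    {Ω : Type*} [MeasurableSpace Ω] (P : Measure Ω) [IsProbabilityMeasure P]
    (Z : ℕ → Ω → ℝ) (σ2 : ℕ → ℝ)
    (hindep : iIndepFun Z P)
    (hL2 : ∀ i, MemLp (Z i) 2 P)
    (hvar : ∀ i, ∫ ω, (Z i ω) ^ 2 ∂P = σ2 i)
    (hpos : ∀ i, 0 < σ2 i)
    (hLind : ∀ ε > (0 : ℝ), Tendsto (fun n =>
      (∑ i ∈ Finset.range n, σ2 i)⁻¹ *
        ∑ i ∈ Finset.range n,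
          ∫ ω in {ω | ε * Real.sqrt (∑ j ∈ Finset.range n, σ2 j) ≤ |Z i ω|}, (Z i ω) ^ 2 ∂P)
      atTop (nhds 0)) :
    ∀ a > (0 : ℝ), ∃ N : ℕ, ∀ n ≥ N, ∀ k, 1 ≤ k → k ≤ n →
      P {ω | a < |∑ i ∈ Finset.range k, (Wtrunc Z σ2 n i ω - ∫ ω', Wtrunc Z σ2 n i ω' ∂P)|}
        ≤ 1 / 2 := by
  intro a ha
  obtain ⟨N, hN⟩ := eventually_atTop.1
    ((hLind (a / 2) (by positivity)).eventually_lt_const (show (0 : ℝ) < a ^ 2 / 4 by positivity))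
  refine ⟨max N 1, fun n hn k _ hkn => ?_⟩
  have hs : 0 < ∑ j ∈ Finset.range n, σ2 j :=
    Finset.sum_pos (fun j _ => hpos j) (Finset.nonempty_range_iff.2 (by omega))
  have hW : ∀ i, MemLp (Wtrunc Z σ2 n i) 2 P := fun i => memLp_truncSq_comp (hL2 i).1 hs 2
  have hvarW : ∑ i ∈ Finset.range k, variance (Wtrunc Z σ2 n i) P ≤ a ^ 2 / 2 :=
    calc ∑ i ∈ Finset.range k, variance (Wtrunc Z σ2 n i) P
        ≤ ∑ i ∈ Finset.range k, ∫ ω, Wtrunc Z σ2 n i ω ^ 2 ∂P :=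
          Finset.sum_le_sum fun i _ => by simpa using variance_le_expectation_sq (hW i).1
      _ ≤ ∑ i ∈ Finset.range n, ∫ ω, Wtrunc Z σ2 n i ω ^ 2 ∂P :=
          Finset.sum_le_sum_of_subset_of_nonneg (Finset.range_subset_range.2 hkn)
            fun _ _ _ => integral_nonneg fun _ => sq_nonneg _
      _ ≤ a ^ 2 / 2 := by
          linarith [sum_integral_Wtrunc_sq_le hL2 hvar hs (a / 2), hN n (le_of_max_le_left hn)]
  calc _ ≤ ENNReal.ofReal ((∑ i ∈ Finset.range k, variance (Wtrunc Z σ2 n i) P) / a ^ 2) :=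
        measure_lt_abs_sum_sub_integral_le (hindep.comp _ fun _ => measurable_truncSq _)
          (fun i _ => hW i) ha
    _ ≤ ENNReal.ofReal (1 / 2) :=
        ENNReal.ofReal_le_ofReal ((div_le_iff₀ (by positivity)).2 (by linarith))
    _ = 1 / 2 := by rw [one_div, ENNReal.ofReal_inv_of_pos two_pos, ENNReal.ofReal_ofNat, one_div]

/-- Under Lindeberg's condition, for every `a > 0`, eventually in `n`,
`max_{1≤k≤n} P(|∑_{i=1}^k (W_{n,i} − E W_{n,i})| > a) ≤ 1/2`. -/
theorem truncated_centered_partial_sums_uniformly_small_tails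
    {Ω : Type*} [MeasurableSpace Ω] (P : Measure Ω) [IsProbabilityMeasure P]
    (Z : ℕ → Ω → ℝ) (σ2 : ℕ → ℝ)
    (hmeas : ∀ i, Measurable (Z i))
    (hindep : iIndepFun Z P)
    (hL2 : ∀ i, MemLp (Z i) 2 P)
    (hmean : ∀ i, ∫ ω, Z i ω ∂P = 0)
    (hvar : ∀ i, ∫ ω, (Z i ω) ^ 2 ∂P = σ2 i)
    (hpos : ∀ i, 0 < σ2 i)
    (hLind : ∀ ε > (0 : ℝ), Tendsto (fun n =>
      (∑ i ∈ Finset.range n, σ2 i)⁻¹ *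
        ∑ i ∈ Finset.range n,
          ∫ ω in {ω | ε * Real.sqrt (∑ j ∈ Finset.range n, σ2 j) ≤ |Z i ω|}, (Z i ω) ^ 2 ∂P)
      atTop (nhds 0)) :
    ∀ a > (0 : ℝ), ∃ N : ℕ, ∀ n ≥ N, ∀ k, 1 ≤ k → k ≤ n →
      P {ω | a < |∑ i ∈ Finset.range k, (Wtrunc Z σ2 n i ω - ∫ ω', Wtrunc Z σ2 n i ω' ∂P)|}
        ≤ 1 / 2 :=
  truncated_centered_partial_sums_uniformly_small_tails_general P Z σ2 hindep hL2 hvar hpos hLind
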